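/- Let G be a compact connected topological group with Haar measure μ, λ a Borel probability measure on G with κ ≥ 2ρ⁺(λ) > 0, and λ = κλ₁ + (1−κ)λ₂ with λ₁, λ₂ probability measures on G. Then G is λ₁-ergodic, i.e., every measurable Y ⊆ G with e_{λ₁}(Y) = 0 has μ(Y) ∈ {0,1}. -/

import Mathlib

open MeasureTheory
open scoped ENNReal

/-- `e_ν(Y) = ∫ μ(Yg \ Y) dν(g)` for a measure `ν` on the group `G` acting on
itself by translations, `μ` being the Haar probability measure. -/
noncomputable def eG {G : Type*} [Group G] [MeasurableSpace G]
    (μ ν : Measure G) (Y : Set G) : ℝ≥0∞ :=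
  ∫⁻ g, μ ((fun x => x * g) '' Y \ Y) ∂ν

/-- `ρ⁺(ν)`: top of the spectrum on `L²₀(G,μ)` of the averaging operator of `ν`. -/
noncomputable def rhoPlusG {G : Type*} [Group G] [MeasurableSpace G]
    (μ ν : Measure G) : ℝ :=
  sSup { r : ℝ | ∃ f : G → ℝ, MemLp f 2 μ ∧ (∫ x, f x ∂μ) = 0 ∧
    (∫ x, f x ^ 2 ∂μ) ≠ 0 ∧
    r = (∫ g, (∫ x, f (x * g) * f x ∂μ) ∂ν) / (∫ x, f x ^ 2 ∂μ) }

/-- The expansion constant `h(ν)`. -/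
noncomputable def hExpG {G : Type*} [Group G] [MeasurableSpace G]
    (μ ν : Measure G) : ℝ :=
  sInf { r : ℝ | ∃ Y : Set G, MeasurableSet Y ∧ 0 < μ Y ∧ μ Y < 1 ∧
    r = (eG μ ν Y).toReal / ((μ Y).toReal * (1 - (μ Y).toReal)) }

/-- `ρ(ν) = ‖M_ν‖` on `L²₀(G,μ)`. -/
noncomputable def rhoG {G : Type*} [Group G] [MeasurableSpace G]
    (μ ν : Measure G) : ℝ :=
  sSup { r : ℝ | ∃ f : G → ℝ, MemLp f 2 μ ∧ (∫ x, f x ∂μ) = 0 ∧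
    (∫ x, f x ^ 2 ∂μ) ≠ 0 ∧
    r = Real.sqrt ((∫ x, (∫ g, f (x * g) ∂ν) ^ 2 ∂μ) / (∫ x, f x ^ 2 ∂μ)) }

/-!
Let `H` be the a.e. stabilizer of `Y` under right translations; it is a closed subgroup, and
`e_{λ₁}(Y) = 0` says that `λ₁`-almost every `g` lies in `H`. If `H = G`, then `μ.restrict Y` is a
finite right-invariant measure, hence equal to `μ Y • μ`, and evaluating on `Yᶜ` gives
`μ Y * μ Yᶜ = 0`. Otherwise `H` is a proper closed subgroup of a connected group, hence Haar-null,
so it has an open neighbourhood `Z = U * H` of measure `t ∈ (0, κ / 2)` that is invariant under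
right translation by `H`. For the test function `1_Z - t` the correlation
`g ↦ μ(Zg⁻¹ ∩ Z) - t²` equals `t - t²` for `λ₁`-a.e. `g` and is at least `-t²` everywhere, so its
Rayleigh quotient for `λ ≥ κ λ₁` is at least `(κ t - t²) / (t - t²) > κ / 2 ≥ ρ⁺(λ)`, which is
absurd.
-/

open Set
open scoped Pointwise symmDiff Topology

theorem ContinuousMap.continuous_mulRight {M : Type*} [Monoid M] [TopologicalSpace M]
    [ContinuousMul M] : Continuous (ContinuousMap.mulRight : M → C(M, M)) :=
  ContinuousMap.continuous_of_continuous_uncurry _ (continuous_snd.mul continuous_fst)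

namespace MeasureTheory

section RightAEStabilizer

variable {G : Type*} [Group G] [MeasurableSpace G]

def rightAEStabilizer (μ : Measure G) [μ.IsMulRightInvariant] (Y : Set G) : Subgroup G :=
  (MulAction.aestabilizer Gᵐᵒᵖ μ Y).unop

variable {μ : Measure G} [μ.IsMulRightInvariant] {Y : Set G} {g : G}

theorem mem_rightAEStabilizer : g ∈ rightAEStabilizer μ Y ↔ (· * g) '' Y =ᵐ[μ] Y := Iff.rfl

theorem mem_rightAEStabilizer_of_measure_image_mul_right_diff_eq_zero [MeasurableMul G]
    [IsFiniteMeasure μ] (hY : MeasurableSet Y) (h : μ ((· * g) '' Y \ Y) = 0) :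
    g ∈ rightAEStabilizer μ Y := by
  rw [mem_rightAEStabilizer, image_mul_right] at *
  exact ae_eq_of_ae_subset_of_measure_ge (ae_le_set.2 h) (measure_preimage_mul_right μ _ Y).ge
    (measurable_mul_const _ hY).nullMeasurableSet (measure_ne_top μ Y)

end RightAEStabilizer

theorem integral_indicator_one_sub_mul_indicator_one_sub {X : Type*} [MeasurableSpace X]
    {μ : Measure X} [IsProbabilityMeasure μ] {A B : Set X} (hA : MeasurableSet A)
    (hB : MeasurableSet B) (a b : ℝ) :
    ∫ x, (A.indicator 1 x - a) * (B.indicator 1 x - b) ∂μ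
      = μ.real (A ∩ B) - b * μ.real A - a * μ.real B + a * b := by
  have h_pt (x : X) : (A.indicator (1 : X → ℝ) x - a) * (B.indicator 1 x - b)
      = (A ∩ B).indicator 1 x - b * A.indicator 1 x - a * B.indicator 1 x + a * b := by
    rw [inter_indicator_one, Pi.mul_apply]
    ring
  have iA : Integrable (A.indicator (1 : X → ℝ)) μ := (integrable_const 1).indicator hA
  have iB : Integrable (B.indicator (1 : X → ℝ)) μ := (integrable_const 1).indicator hB
  have iAB : Integrable ((A ∩ B).indicator (1 : X → ℝ)) μ :=
    (integrable_const 1).indicator (hA.inter hB)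
  have i1 : Integrable (fun x => (A ∩ B).indicator (1 : X → ℝ) x - b * A.indicator 1 x) μ :=
    iAB.sub (iA.const_mul b)
  have i2 : Integrable (fun x => (A ∩ B).indicator (1 : X → ℝ) x - b * A.indicator 1 x
      - a * B.indicator 1 x) μ := i1.sub (iB.const_mul a)
  simp_rw [h_pt]
  rw [integral_add i2 (integrable_const _), integral_sub i1 (iB.const_mul a),
    integral_sub iAB (iA.const_mul b), integral_const_mul, integral_const_mul,
    integral_indicator_one (hA.inter hB), integral_indicator_one hA, integral_indicator_one hB,
    integral_const, probReal_univ, one_smul]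

section Rayleigh

variable {G : Type*} [Group G] [MeasurableSpace G] [MeasurableMul G] {μ : Measure G}
  [μ.IsMulRightInvariant] {f : G → ℝ}

theorem integral_mul_comp_mul_right_le_integral_sq (hf : MemLp f 2 μ) (g : G) :
    ∫ x, f (x * g) * f x ∂μ ≤ ∫ x, f x ^ 2 ∂μ := by
  have hmp := measurePreserving_mul_right μ g
  have hfg : MemLp (fun x => f (x * g)) 2 μ := hf.comp_measurePreserving hmp
  have h_sq : ∫ x, f (x * g) ^ 2 ∂μ = ∫ x, f x ^ 2 ∂μ :=
    hmp.integral_comp (MeasurableEquiv.mulRight g).measurableEmbedding (f · ^ 2)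
  calc ∫ x, f (x * g) * f x ∂μ ≤ ∫ x, (f (x * g) ^ 2 + f x ^ 2) / 2 ∂μ :=
        integral_mono (hfg.integrable_mul hf)
          ((hfg.integrable_sq.add hf.integrable_sq).div_const 2)
          fun x => by nlinarith [sq_nonneg (f (x * g) - f x)]
    _ = ∫ x, f x ^ 2 ∂μ := by
        rw [integral_div, integral_add hfg.integrable_sq hf.integrable_sq, h_sq]
        ring

theorem div_integral_sq_le_rhoPlusG (ν : Measure G) [IsProbabilityMeasure ν] (hf : MemLp f 2 μ)
    (h_mean : ∫ x, f x ∂μ = 0) (h_ne : ∫ x, f x ^ 2 ∂μ ≠ 0) :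
    (∫ g, (∫ x, f (x * g) * f x ∂μ) ∂ν) / ∫ x, f x ^ 2 ∂μ ≤ rhoPlusG μ ν := by
  refine le_csSup ⟨1, ?_⟩ ⟨f, hf, h_mean, h_ne, rfl⟩
  rintro _ ⟨f, hf, -, h_ne, rfl⟩
  have h_pos : 0 < ∫ x, f x ^ 2 ∂μ :=
    (integral_nonneg fun x => sq_nonneg (f x)).lt_of_ne' h_ne
  rw [div_le_one h_pos]
  by_cases h_int : Integrable (fun g => ∫ x, f (x * g) * f x ∂μ) ν
  · simpa using integral_mono h_int (integrable_const _)
      (integral_mul_comp_mul_right_le_integral_sq hf)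
  · rw [integral_undef h_int]
    exact h_pos.le

end Rayleigh

section CompactGroup

variable {G : Type*} [Group G] [TopologicalSpace G] [IsTopologicalGroup G] [CompactSpace G]
  [MeasurableSpace G] [BorelSpace G]

instance (priority := 100) Measure.IsHaarMeasure.isMulRightInvariant_of_isProbabilityMeasure
    (μ : Measure G) [μ.IsHaarMeasure] [IsProbabilityMeasure μ] : μ.IsMulRightInvariant where
  map_mul_right_eq_self g :=
    have : IsProbabilityMeasure (μ.map (· * g)) :=
      Measure.isProbabilityMeasure_map (measurable_mul_const g).aemeasurable
    Measure.isHaarMeasure_eq_of_isProbabilityMeasure _ μ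

section

variable {μ : Measure G} [μ.IsHaarMeasure] [μ.IsMulRightInvariant] {Y : Set G}

theorem continuous_measureReal_preimage_mul_right_inter {Z W : Set G}
    (hZ : MeasurableSet Z) (hW : MeasurableSet W) :
    Continuous fun g => μ.real ((· * g) ⁻¹' Z ∩ W) := by
  refine continuous_iff_continuousAt.2 fun g₀ => ?_
  have h_symmDiff := tendsto_measure_symmDiff_preimage_nhds_zero
    (ContinuousMap.continuous_mulRight.tendsto g₀)
    (.of_forall fun g => measurePreserving_mul_right μ g) (measurePreserving_mul_right μ g₀)
    hZ.nullMeasurableSet (measure_ne_top μ Z)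
  rw [ContinuousAt, tendsto_iff_dist_tendsto_zero]
  refine squeeze_zero (fun _ => dist_nonneg) (fun g => ?_)
    (by simpa using (ENNReal.tendsto_toReal ENNReal.zero_ne_top).comp h_symmDiff)
  rw [Real.dist_eq, Function.comp_apply, ← measureReal_def]
  calc _ ≤ μ.real (((· * g) ⁻¹' Z ∩ W) ∆ ((· * g₀) ⁻¹' Z ∩ W)) :=
        abs_measureReal_sub_le_measureReal_symmDiff
          ((measurable_mul_const g hZ).inter hW).nullMeasurableSet
          ((measurable_mul_const g₀ hZ).inter hW).nullMeasurableSet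
    _ ≤ _ := by
        rw [← inter_symmDiff_distrib_right]
        exact measureReal_mono inter_subset_left

theorem measurable_measure_image_mul_right_diff (hY : MeasurableSet Y) :
    Measurable fun g => μ ((· * g) '' Y \ Y) := by
  have h_eq : (fun g => μ ((· * g) '' Y \ Y)) =
      fun g => ENNReal.ofReal (μ.real ((· * g⁻¹) ⁻¹' Y ∩ Yᶜ)) := by
    ext g
    rw [image_mul_right, sdiff_eq, ofReal_measureReal]
  rw [h_eq]
  exact ENNReal.measurable_ofReal.comp
    ((continuous_measureReal_preimage_mul_right_inter hY hY.compl).comp continuous_inv).measurable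

theorem ae_mem_rightAEStabilizer_of_eG_eq_zero (hY : MeasurableSet Y) {ν : Measure G}
    (h : eG μ ν Y = 0) : ∀ᵐ g ∂ν, g ∈ rightAEStabilizer μ Y := by
  filter_upwards [(lintegral_eq_zero_iff (measurable_measure_image_mul_right_diff hY)).1 h]
    with g hg
  exact mem_rightAEStabilizer_of_measure_image_mul_right_diff_eq_zero hY hg

theorem isClosed_rightAEStabilizer (hY : MeasurableSet Y) :
    IsClosed (rightAEStabilizer μ Y : Set G) := by
  have h_eq : (rightAEStabilizer μ Y : Set G) =
      Inv.inv ⁻¹' {g | ContinuousMap.mulRight g ⁻¹' Y =ᵐ[μ] Y} := by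
    ext g
    simp [mem_rightAEStabilizer, image_mul_right]
  rw [h_eq]
  exact (isClosed_setOfPred_preimage_ae_eq ContinuousMap.continuous_mulRight
    (fun g => measurePreserving_mul_right μ g) Y hY.nullMeasurableSet
    (measure_ne_top μ Y)).preimage continuous_inv

end

variable (μ : Measure G) [μ.IsHaarMeasure]

theorem Measure.inv_eq_measure_univ_smul_of_isMulRightInvariant [IsProbabilityMeasure μ]
    (ν : Measure G) [IsFiniteMeasure ν] [ν.IsMulRightInvariant] : ν.inv = ν univ • μ := by
  have h := Measure.isMulInvariant_eq_smul_of_compactSpace ν.inv μ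
  have h_univ := congrArg (· univ) h
  simp only [Measure.inv_apply, inv_univ, Measure.smul_apply, measure_univ] at h_univ
  rw [h_univ, smul_one_smul]
  exact h

theorem Measure.eq_measure_univ_smul_of_isMulRightInvariant [IsProbabilityMeasure μ]
    (ν : Measure G) [IsFiniteMeasure ν] [ν.IsMulRightInvariant] : ν = ν univ • μ := by
  have hμ : μ.inv = μ := by
    simpa using Measure.inv_eq_measure_univ_smul_of_isMulRightInvariant μ μ
  conv_lhs => rw [← Measure.inv_inv ν,
    Measure.inv_eq_measure_univ_smul_of_isMulRightInvariant μ ν, Measure.inv, Measure.map_smul,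
    ← Measure.inv, hμ]

theorem _root_.Subgroup.measure_eq_zero_of_isClosed_of_ne_top [ConnectedSpace G]
    {H : Subgroup G} (hH : IsClosed (H : Set G)) (h_ne : H ≠ ⊤) : μ H = 0 := by
  by_contra h_pos
  have h_nhds : (H : Set G) ∈ 𝓝 (1 : G) := by
    refine Filter.mem_of_superset (Measure.div_mem_nhds_one_of_haar_pos μ H hH.measurableSet
      (pos_iff_ne_zero.2 h_pos)) ?_
    rintro _ ⟨a, ha, b, hb, rfl⟩
    exact H.div_mem ha hb
  exact h_ne <| SetLike.coe_injective <|
    IsClopen.eq_univ ⟨hH, H.isOpen_of_mem_nhds h_nhds⟩ ⟨1, H.one_mem⟩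

theorem measure_eq_zero_or_one_of_rightAEStabilizer_eq_top [IsProbabilityMeasure μ] {Y : Set G}
    (hY : MeasurableSet Y) (h_top : rightAEStabilizer μ Y = ⊤) : μ Y = 0 ∨ μ Y = 1 := by
  have : (μ.restrict Y).IsMulRightInvariant := ⟨fun g => by
    rw [((measurePreserving_mul_right μ g).restrict_image_emb
      (MeasurableEquiv.mulRight g).measurableEmbedding Y).map_eq]
    exact Measure.restrict_congr_set ((Subgroup.eq_top_iff' _).1 h_top g)⟩
  have h_compl := congrArg (· Yᶜ) (Measure.eq_measure_univ_smul_of_isMulRightInvariant μ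
    (μ.restrict Y))
  simp only [Measure.restrict_apply hY.compl, compl_inter_self, measure_empty,
    Measure.restrict_apply MeasurableSet.univ, univ_inter, Measure.smul_apply, smul_eq_mul]
    at h_compl
  rcases mul_eq_zero.1 h_compl.symm with h | h
  · exact .inl h
  · exact .inr ((prob_compl_eq_zero_iff hY).1 h)

theorem _root_.Subgroup.exists_isOpen_preimage_mul_right_eq_measure_lt {H : Subgroup G}
    (hH : IsClosed (H : Set G)) (hμH : μ H = 0) {ε : ℝ≥0∞} (hε : 0 < ε) :
    ∃ Z : Set G, IsOpen Z ∧ Z.Nonempty ∧ (∀ h ∈ H, (· * h) ⁻¹' Z = Z) ∧ μ Z < ε := by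
  obtain ⟨V, hHV, hV, hVε⟩ := Set.exists_isOpen_lt_of_lt (H : Set G) ε (hμH ▸ hε)
  obtain ⟨W, hW, hWV⟩ := compact_open_separated_mul_left hH.isCompact hV hHV
  refine ⟨interior W * H, isOpen_interior.mul_right,
    ⟨1, 1, mem_interior_iff_mem_nhds.2 hW, 1, H.one_mem, one_mul 1⟩, fun h hh => ?_,
    (measure_mono ((mul_subset_mul_right interior_subset).trans hWV)).trans_lt hVε⟩
  ext x
  constructor
  · rintro ⟨u, hu, k, hk, hx : u * k = x * h⟩
    refine ⟨u, hu, k * h⁻¹, H.mul_mem hk (H.inv_mem hh), ?_⟩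
    change u * (k * h⁻¹) = x
    rw [← mul_assoc, hx, mul_inv_cancel_right]
  · rintro ⟨u, hu, k, hk, rfl⟩
    exact ⟨u, hu, k * h, H.mul_mem hk hh, (mul_assoc u k h).symm⟩

theorem div_measureReal_sub_sq_le_rhoPlusG [IsProbabilityMeasure μ] (ν : Measure G)
    [IsProbabilityMeasure ν] {Z : Set G} (hZ : MeasurableSet Z) (hZ0 : 0 < μ.real Z)
    (hZ1 : μ.real Z < 1) :
    (∫ g, μ.real ((· * g) ⁻¹' Z ∩ Z) ∂ν - μ.real Z ^ 2) / (μ.real Z - μ.real Z ^ 2)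
      ≤ rhoPlusG μ ν := by
  set t := μ.real Z
  set F : G → ℝ := fun x => Z.indicator 1 x - t
  have iZ : Integrable (Z.indicator (1 : G → ℝ)) μ := (integrable_const 1).indicator hZ
  have h_corr (g : G) : ∫ x, F (x * g) * F x ∂μ = μ.real ((· * g) ⁻¹' Z ∩ Z) - t ^ 2 := by
    change ∫ x, (((· * g) ⁻¹' Z).indicator 1 x - t) * (Z.indicator 1 x - t) ∂μ = _
    have h_t : μ.real ((· * g) ⁻¹' Z) = t := by
      rw [measureReal_def, measure_preimage_mul_right, ← measureReal_def]
    rw [integral_indicator_one_sub_mul_indicator_one_sub (measurable_mul_const g hZ) hZ, h_t]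
    ring
  have h_sq : ∫ x, F x ^ 2 ∂μ = t - t ^ 2 := by
    simp_rw [F, sq]
    rw [integral_indicator_one_sub_mul_indicator_one_sub hZ hZ, inter_self]
    ring
  have h_mean : ∫ x, F x ∂μ = 0 := by
    rw [integral_sub iZ (integrable_const t),
      integral_indicator_one hZ, integral_const, probReal_univ, one_smul, sub_self]
  have h_int : Integrable (fun g => μ.real ((· * g) ⁻¹' Z ∩ Z)) ν :=
    (continuous_measureReal_preimage_mul_right_inter hZ hZ).integrable_of_hasCompactSupport
      (HasCompactSupport.of_compactSpace _)
  have h_memLp : MemLp F 2 μ :=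
    (memLp_indicator_const 2 hZ (1 : ℝ) (.inr (measure_ne_top μ Z))).sub (memLp_const t)
  have h_rho := div_integral_sq_le_rhoPlusG ν h_memLp h_mean (by rw [h_sq]; nlinarith)
  rwa [h_sq, integral_congr_ae (ae_of_all _ h_corr), integral_sub h_int (integrable_const _),
    integral_const, probReal_univ, one_smul] at h_rho

theorem half_lt_rhoPlusG_of_ae_preimage_mul_right_eq [IsProbabilityMeasure μ]
    {lam lam₁ : Measure G} [IsProbabilityMeasure lam] [IsProbabilityMeasure lam₁] {κ : ℝ}
    (hκ : 0 < κ) (hle : ENNReal.ofReal κ • lam₁ ≤ lam) {Z : Set G} (hZ : MeasurableSet Z)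
    (hZ0 : 0 < μ.real Z) (hZκ : μ.real Z < κ / 2)
    (h_inv : ∀ᵐ g ∂lam₁, (· * g) ⁻¹' Z = Z) : κ / 2 < rhoPlusG μ lam := by
  set t := μ.real Z
  have hκ1 : κ ≤ 1 := by simpa using hle univ
  have h_int : Integrable (fun g => μ.real ((· * g) ⁻¹' Z ∩ Z)) lam :=
    (continuous_measureReal_preimage_mul_right_inter hZ hZ).integrable_of_hasCompactSupport
      (HasCompactSupport.of_compactSpace _)
  have h_ae : (fun g => μ.real ((· * g) ⁻¹' Z ∩ Z)) =ᵐ[lam₁] fun _ => t :=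
    h_inv.mono fun g hg => by simp only [hg, inter_self, t]
  have h_lower : κ * t ≤ ∫ g, μ.real ((· * g) ⁻¹' Z ∩ Z) ∂lam := calc
    κ * t = ∫ g, μ.real ((· * g) ⁻¹' Z ∩ Z) ∂(ENNReal.ofReal κ • lam₁) := by
      rw [integral_smul_measure, ENNReal.toReal_ofReal hκ.le, integral_congr_ae h_ae,
        integral_const, probReal_univ, one_smul, smul_eq_mul]
    _ ≤ _ := integral_mono_measure hle (ae_of_all _ fun _ => measureReal_nonneg) h_int
  calc κ / 2 < (κ * t - t ^ 2) / (t - t ^ 2) := by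
        rw [lt_div_iff₀ (by nlinarith)]
        nlinarith [mul_pos hκ hZ0]
    _ ≤ (∫ g, μ.real ((· * g) ⁻¹' Z ∩ Z) ∂lam - t ^ 2) / (t - t ^ 2) := by
        gcongr
        nlinarith
    _ ≤ rhoPlusG μ lam := div_measureReal_sub_sq_le_rhoPlusG μ lam hZ hZ0 (by linarith)

end CompactGroup

end MeasureTheory

open MeasureTheory

theorem convex_part_ergodic_general {G : Type*} [Group G] [TopologicalSpace G]
    [IsTopologicalGroup G] [CompactSpace G] [ConnectedSpace G]
    [MeasurableSpace G] [BorelSpace G]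
    (μ : Measure G) [μ.IsHaarMeasure] [IsProbabilityMeasure μ]
    (lam lam₁ lam₂ : Measure G) [IsProbabilityMeasure lam]
    [IsProbabilityMeasure lam₁]
    (κ : ℝ)
    (hκ : 2 * rhoPlusG μ lam ≤ κ) (hρpos : 0 < rhoPlusG μ lam)
    (hdec : lam = ENNReal.ofReal κ • lam₁ + ENNReal.ofReal (1 - κ) • lam₂) :
    ∀ Y : Set G, MeasurableSet Y → eG μ lam₁ Y = 0 → μ Y = 0 ∨ μ Y = 1 := by
  intro Y hY hY0
  have hκ0 : 0 < κ := by linarith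
  have hH : IsClosed (rightAEStabilizer μ Y : Set G) := isClosed_rightAEStabilizer hY
  by_cases h_top : rightAEStabilizer μ Y = ⊤
  · exact measure_eq_zero_or_one_of_rightAEStabilizer_eq_top μ hY h_top
  obtain ⟨Z, hZ_open, hZ_ne, hZ_inv, hZ_lt⟩ :=
    Subgroup.exists_isOpen_preimage_mul_right_eq_measure_lt μ hH
      (Subgroup.measure_eq_zero_of_isClosed_of_ne_top μ hH h_top)
      (ENNReal.ofReal_pos.2 (half_pos hκ0))
  have h_rho := half_lt_rhoPlusG_of_ae_preimage_mul_right_eq μ hκ0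
    (hdec ▸ Measure.le_add_right le_rfl) hZ_open.measurableSet
    (ENNReal.toReal_pos (hZ_open.measure_pos μ hZ_ne).ne' (measure_ne_top μ Z))
    ((ENNReal.lt_ofReal_iff_toReal_lt (measure_ne_top μ Z)).1 hZ_lt)
    ((ae_mem_rightAEStabilizer_of_eG_eq_zero hY hY0).mono hZ_inv)
  linarith

theorem convex_part_ergodic {G : Type*} [Group G] [TopologicalSpace G]
    [IsTopologicalGroup G] [CompactSpace G] [ConnectedSpace G]
    [MeasurableSpace G] [BorelSpace G]
    (μ : Measure G) [μ.IsHaarMeasure] [IsProbabilityMeasure μ]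
    (lam lam₁ lam₂ : Measure G) [IsProbabilityMeasure lam]
    [IsProbabilityMeasure lam₁] [IsProbabilityMeasure lam₂]
    (κ : ℝ) (hκ1 : κ ≤ 1)
    (hκ : 2 * rhoPlusG μ lam ≤ κ) (hρpos : 0 < rhoPlusG μ lam)
    (hdec : lam = ENNReal.ofReal κ • lam₁ + ENNReal.ofReal (1 - κ) • lam₂) :
    ∀ Y : Set G, MeasurableSet Y → eG μ lam₁ Y = 0 → μ Y = 0 ∨ μ Y = 1 :=
  convex_part_ergodic_general μ lam lam₁ lam₂ κ hκ hρpos hdec
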